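/- Let M, a, s be positive integers with M > 1 such that ∑_{i=0}^{M-1} (a+i)^2 = s^2, and suppose M = 24·m₁ + 9 for a nonnegative integer m₁. Then for every prime p > 3 with p ≡ 3 (mod 4), there do not exist integers i ≥ 0 and q ≥ 1 with p ∤ q such that 24·m₁ + 10 = p^(2i+1)·q; equivalently, the exact power of p dividing M + 1 is even. -/

import Mathlib

/-! With `b = 2a + M - 1` one has `12 s² = 3 M b² + (M - 1) M (M + 1)`; for `M = 24 m₁ + 9`,
which is divisible by `3`, this reads `(2s)² - M b² = (M - 1) (M / 3) (M + 1)`. If `p^(2i+1)`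
exactly divides `M + 1`, the right-hand side has odd `p`-adic valuation, as `p` is prime to
`M - 1` and `M`. But `M ≡ -1 (mod p)` turns `x² - M y²` into `x² + y²` modulo `p`, and since `-1`
is not a square modulo `p ≡ 3 (mod 4)`, `p ∣ x² + y²` forces `p ∣ x` and `p ∣ y`. Dividing by
`p²` repeatedly shows that `x² - M y²` can only have even valuation. -/

theorem Int.dvd_right_of_dvd_sq_add_sq {p : ℕ} [Fact p.Prime] (hp4 : p % 4 = 3) {x y : ℤ}
    (h : (p : ℤ) ∣ x ^ 2 + y ^ 2) : (p : ℤ) ∣ y := by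
  rw [← ZMod.intCast_zmod_eq_zero_iff_dvd] at h ⊢
  by_contra hy
  push_cast at h
  exact ZMod.mod_four_ne_three_of_sq_eq_neg_sq' hy (eq_neg_of_add_eq_zero_left h) hp4

theorem Int.dvd_of_dvd_sq_sub_mul_sq {p : ℕ} [Fact p.Prime] (hp4 : p % 4 = 3)
    {m : ℤ} (hm : (p : ℤ) ∣ m + 1) {x y : ℤ} (h : (p : ℤ) ∣ x ^ 2 - m * y ^ 2) :
    (p : ℤ) ∣ x ∧ (p : ℤ) ∣ y := by
  have hsq : (p : ℤ) ∣ x ^ 2 + y ^ 2 := by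
    rw [show x ^ 2 + y ^ 2 = x ^ 2 - m * y ^ 2 + (m + 1) * y ^ 2 by ring]
    exact dvd_add h (hm.mul_right _)
  exact ⟨Int.dvd_right_of_dvd_sq_add_sq hp4 (add_comm (x ^ 2) _ ▸ hsq),
    Int.dvd_right_of_dvd_sq_add_sq hp4 hsq⟩

theorem Int.dvd_of_sq_sub_mul_sq_eq_prime_pow_mul {p : ℕ} [Fact p.Prime] (hp4 : p % 4 = 3)
    {m : ℤ} (hm : (p : ℤ) ∣ m + 1) (j : ℕ) {x y c : ℤ}
    (h : x ^ 2 - m * y ^ 2 = (p : ℤ) ^ (2 * j + 1) * c) : (p : ℤ) ∣ c := by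
  have hp : (p : ℤ) ≠ 0 := by exact_mod_cast (Fact.out : p.Prime).ne_zero
  induction j generalizing x y with
  | zero =>
    obtain ⟨⟨x, rfl⟩, ⟨y, rfl⟩⟩ := Int.dvd_of_dvd_sq_sub_mul_sq hp4 hm ⟨c, by simpa using h⟩
    exact ⟨x ^ 2 - m * y ^ 2, mul_left_cancel₀ hp (by linear_combination -h)⟩
  | succ j ih =>
    obtain ⟨⟨x, rfl⟩, ⟨y, rfl⟩⟩ :=
      Int.dvd_of_dvd_sq_sub_mul_sq hp4 hm ⟨(p : ℤ) ^ (2 * j + 2) * c, by rw [h]; ring⟩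
    exact ih (x := x) (y := y) (mul_left_cancel₀ (pow_ne_zero 2 hp) (by linear_combination h))

theorem Int.twelve_mul_sum_range_add_sq (a : ℤ) (n : ℕ) :
    12 * ∑ i ∈ Finset.range n, (a + i) ^ 2 =
      3 * n * (2 * a + n - 1) ^ 2 + (n - 1) * n * (n + 1) := by
  induction n with
  | zero => simp
  | succ n ih =>
    rw [Finset.sum_range_succ, mul_add, ih]
    push_cast
    ring

theorem stmt_general (M a s m₁ : ℕ)
    (hsum : ∑ i ∈ Finset.range M, (a + i) ^ 2 = s ^ 2)
    (hMeq : M = 24 * m₁ + 9) :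
    ∀ p : ℕ, p.Prime → 3 < p → p % 4 = 3 →
      ¬ ∃ i q : ℕ, 1 ≤ q ∧ ¬ p ∣ q ∧ 24 * m₁ + 10 = p ^ (2 * i + 1) * q := by
  rintro p hp - hp4 ⟨i, q, -, hpq, hMq⟩
  have := Fact.mk hp
  subst hMeq
  have hMq' : (24 * m₁ + 10 : ℤ) = p ^ (2 * i + 1) * q := by exact_mod_cast hMq
  have hp_dvd : (p : ℤ) ∣ (24 * m₁ + 9 : ℤ) + 1 :=
    ⟨p ^ (2 * i) * q, by rw [show (24 * m₁ + 9 : ℤ) + 1 = 24 * m₁ + 10 by ring, hMq']; ring⟩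
  have hform : (2 * (s : ℤ)) ^ 2 - (24 * m₁ + 9 : ℤ) * (2 * a + 24 * m₁ + 8) ^ 2 =
      p ^ (2 * i + 1) * ((24 * m₁ + 8) * (8 * m₁ + 3) * q) := by
    have h12 := Int.twelve_mul_sum_range_add_sq a (24 * m₁ + 9)
    rw [show ∑ k ∈ Finset.range (24 * m₁ + 9), ((a : ℤ) + k) ^ 2 = s ^ 2 by exact_mod_cast hsum]
      at h12
    push_cast at h12
    calc _ = (24 * m₁ + 8) * (8 * m₁ + 3) * (24 * m₁ + 10 : ℤ) := by linarith
      _ = _ := by rw [hMq']; ring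
  have hc := Int.dvd_of_sq_sub_mul_sq_eq_prime_pow_mul hp4 hp_dvd i hform
  rcases (Nat.prime_iff_prime_int.mp hp).dvd_mul.mp hc with hc | hc
  · have h2 : (p : ℤ) ∣ 2 := by
      have := dvd_sub (hc.mul_left 3) (hp_dvd.mul_right (24 * m₁ + 7))
      rwa [show 3 * ((24 * m₁ + 8) * (8 * m₁ + 3) : ℤ) - (24 * m₁ + 9 + 1) * (24 * m₁ + 7) = 2 by
        ring] at this
    have := Int.le_of_dvd two_pos h2
    omega
  · exact hpq (Int.natCast_dvd_natCast.mp hc)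

theorem stmt (M a s m₁ : ℕ) (hM : 1 < M) (ha : 1 ≤ a) (hs : 1 ≤ s)
    (hsum : ∑ i ∈ Finset.range M, (a + i) ^ 2 = s ^ 2)
    (hMeq : M = 24 * m₁ + 9) :
    ∀ p : ℕ, p.Prime → 3 < p → p % 4 = 3 →
      ¬ ∃ i q : ℕ, 1 ≤ q ∧ ¬ p ∣ q ∧ 24 * m₁ + 10 = p ^ (2 * i + 1) * q :=
  stmt_general M a s m₁ hsum hMeq
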